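/- Let σ > 0 and ℓ > 0 and, for an integer j, define the eigenvalue of the periodic Gaussian covariance operator by λ_j^per = σ² ∫_{−π}^{π} e^{−t²/ℓ²} e^{i j t} dt. Then |λ_j^per − √π σ² ℓ e^{−ℓ² j²/4}| ≤ (1/π) σ² ℓ² e^{−π²/ℓ²}; i.e., λ_j^per = √π σ² ℓ e^{−ℓ² j²/4} + O(σ² ℓ² e^{−π²/ℓ²}) with a constant independent of j. -/

import Mathlib

/-!
On the whole line the Gaussian Fourier integral equals `√π σ² ℓ e^{-ℓ²j²/4}`, so the error is
the integral over `|t| > π`, bounded by the Gaussian tail mass `2 ∫_π^∞ e^{-t²/ℓ²} dt`.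
Since `1 ≤ t/π` there, this tail is at most `(2/π) ∫_π^∞ t e^{-t²/ℓ²} dt = (ℓ²/π) e^{-π²/ℓ²}`.
-/

open MeasureTheory Real Set Filter Topology
open scoped Complex

theorem integral_Ioi_mul_exp_neg_mul_sq {b : ℝ} (hb : 0 < b) (c : ℝ) :
    ∫ t in Ioi c, t * exp (-b * t ^ 2) = exp (-b * c ^ 2) / (2 * b) := by
  have hderiv : ∀ t : ℝ, HasDerivAt (fun t => -(2 * b)⁻¹ * exp (-b * t ^ 2))
      (t * exp (-b * t ^ 2)) t := fun t => by
    refine (((hasDerivAt_pow 2 t).const_mul (-b)).exp.const_mul (-(2 * b)⁻¹)).congr_deriv ?_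
    field_simp
    ring
  have hlim : Tendsto (fun t : ℝ => -(2 * b)⁻¹ * exp (-b * t ^ 2)) atTop (𝓝 (-(2 * b)⁻¹ * 0)) :=
    (tendsto_exp_atBot.comp ((tendsto_pow_atTop two_ne_zero).const_mul_atTop_of_neg
      (neg_lt_zero.2 hb))).const_mul _
  rw [integral_Ioi_of_hasDerivAt_of_tendsto' (fun t _ => hderiv t)
    (integrable_mul_exp_neg_mul_sq hb).integrableOn hlim]
  ring

theorem integral_Ioi_exp_neg_mul_sq_le {b c : ℝ} (hb : 0 < b) (hc : 0 < c) :
    ∫ t in Ioi c, exp (-b * t ^ 2) ≤ exp (-b * c ^ 2) / (2 * b * c) := by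
  calc ∫ t in Ioi c, exp (-b * t ^ 2)
      ≤ ∫ t in Ioi c, c⁻¹ * (t * exp (-b * t ^ 2)) := by
        refine setIntegral_mono_on (integrable_exp_neg_mul_sq hb).integrableOn
          ((integrable_mul_exp_neg_mul_sq hb).integrableOn.const_mul _) measurableSet_Ioi
          fun t ht => ?_
        rw [← mul_assoc]
        exact le_mul_of_one_le_left (exp_pos _).le ((one_le_inv_mul₀ hc).2 (le_of_lt ht))
    _ = exp (-b * c ^ 2) / (2 * b * c) := by
        rw [integral_const_mul, integral_Ioi_mul_exp_neg_mul_sq hb]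
        field_simp

theorem integral_compl_Ioc_neg_of_even {E : Type*} [NormedAddCommGroup E] [NormedSpace ℝ E]
    {f : ℝ → E} (heven : ∀ x, f (-x) = f x) (hf : Integrable f) {c : ℝ} (hc : 0 ≤ c) :
    ∫ x in (Ioc (-c) c)ᶜ, f x = (2 : ℝ) • ∫ x in Ioi c, f x := by
  have hcompl : (Ioc (-c) c)ᶜ = Iic (-c) ∪ Ioi c := by
    ext x
    simp only [mem_compl_iff, mem_Ioc, mem_union, mem_Iic, mem_Ioi, not_and_or, not_lt, not_le]
  have hleft : ∫ x in Iic (-c), f x = ∫ x in Ioi c, f x := by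
    rw [← integral_comp_neg_Ioi]
    simp_rw [heven]
  rw [hcompl, setIntegral_union (Iic_disjoint_Ioi (by linarith)) measurableSet_Ioi
    hf.integrableOn hf.integrableOn, hleft, two_smul]

theorem norm_setIntegral_sub_integral_le {α E : Type*} [MeasurableSpace α] {μ : Measure α}
    [NormedAddCommGroup E] [NormedSpace ℝ E] {f : α → E} {s : Set α} (hs : MeasurableSet s)
    (hf : Integrable f μ) :
    ‖∫ x in s, f x ∂μ - ∫ x, f x ∂μ‖ ≤ ∫ x in sᶜ, ‖f x‖ ∂μ := by
  rw [← integral_add_compl hs hf, sub_add_cancel_left, norm_neg]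
  exact norm_integral_le_integral_norm f

theorem integral_exp_neg_mul_sq_mul_cexp {b : ℝ} (hb : 0 < b) (ξ : ℝ) :
    ∫ t : ℝ, (exp (-b * t ^ 2) : ℂ) * cexp (Complex.I * ξ * t)
      = ((√(π / b) * exp (-ξ ^ 2 / (4 * b)) : ℝ) : ℂ) := by
  have hsqrt : ((π : ℂ) / b) ^ (1 / 2 : ℂ) = ((√(π / b) : ℝ) : ℂ) := by
    rw [show (1 / 2 : ℂ) = ((1 / 2 : ℝ) : ℂ) by norm_num, ← Complex.ofReal_div,
      ← Complex.ofReal_cpow (by positivity), sqrt_eq_rpow]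
  simp_rw [mul_comm (_ : ℂ) (cexp _), Complex.ofReal_exp]
  push_cast
  rw [fourierIntegral_gaussian (by simpa using hb), hsqrt]

theorem norm_integral_Ioc_sub_integral_gaussian_mul_cexp_le {b c : ℝ} (hb : 0 < b) (hc : 0 < c)
    (ξ : ℝ) :
    ‖(∫ t in Ioc (-c) c, (exp (-b * t ^ 2) : ℂ) * cexp (Complex.I * ξ * t))
        - ∫ t : ℝ, (exp (-b * t ^ 2) : ℂ) * cexp (Complex.I * ξ * t)‖
      ≤ exp (-b * c ^ 2) / (b * c) := by
  set f : ℝ → ℂ := fun t => (exp (-b * t ^ 2) : ℂ) * cexp (Complex.I * ξ * t)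
  have hnorm : ∀ t, ‖f t‖ = exp (-b * t ^ 2) := fun t => by
    simp [f, Complex.norm_exp, -Complex.ofReal_pow]
  have hf : Integrable f :=
    (integrable_exp_neg_mul_sq hb).mono' (by fun_prop) (ae_of_all _ fun t => (hnorm t).le)
  calc ‖(∫ t in Ioc (-c) c, f t) - ∫ t, f t‖
      ≤ ∫ t in (Ioc (-c) c)ᶜ, exp (-b * t ^ 2) := by
        simpa only [hnorm] using norm_setIntegral_sub_integral_le measurableSet_Ioc hf
    _ = 2 * ∫ t in Ioi c, exp (-b * t ^ 2) := by
        rw [integral_compl_Ioc_neg_of_even (fun t => by ring_nf) (integrable_exp_neg_mul_sq hb)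
          hc.le, smul_eq_mul]
    _ ≤ 2 * (exp (-b * c ^ 2) / (2 * b * c)) := by
        gcongr
        exact integral_Ioi_exp_neg_mul_sq_le hb hc
    _ = exp (-b * c ^ 2) / (b * c) := by
        field_simp

theorem stmt10_general (σ ℓ : ℝ) (hℓ : 0 < ℓ) (j : ℤ)
    (lam : ℂ)
    (hlam : lam = (σ ^ 2 : ℂ) * ∫ t in (-Real.pi)..Real.pi,
      (Real.exp (-(t ^ 2) / ℓ ^ 2) : ℂ) * Complex.exp (Complex.I * (j : ℂ) * (t : ℂ))) :
    ‖lam -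
        ((Real.sqrt Real.pi * σ ^ 2 * ℓ * Real.exp (-(ℓ ^ 2 * (j : ℝ) ^ 2 / 4)) : ℝ) : ℂ)‖ ≤
      (1 / Real.pi) * σ ^ 2 * ℓ ^ 2 * Real.exp (-(Real.pi ^ 2) / ℓ ^ 2) := by
  set b := (ℓ ^ 2)⁻¹ with hb_def
  have hb : 0 < b := by positivity
  have hlimit : ((√π * σ ^ 2 * ℓ * exp (-(ℓ ^ 2 * (j : ℝ) ^ 2 / 4)) : ℝ) : ℂ)
      = (σ ^ 2 : ℂ) * ∫ t : ℝ, (exp (-b * t ^ 2) : ℂ) * cexp (Complex.I * (j : ℝ) * t) := by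
    rw [integral_exp_neg_mul_sq_mul_cexp hb, hb_def, div_inv_eq_mul, sqrt_mul pi_pos.le,
      sqrt_sq hℓ.le, show -(j : ℝ) ^ 2 / (4 * (ℓ ^ 2)⁻¹) = -(ℓ ^ 2 * (j : ℝ) ^ 2 / 4) by field_simp]
    push_cast
    ring
  have htrunc : (∫ t in (-π)..π, (exp (-(t ^ 2) / ℓ ^ 2) : ℂ) * cexp (Complex.I * j * t))
      = ∫ t in Ioc (-π) π, (exp (-b * t ^ 2) : ℂ) * cexp (Complex.I * (j : ℝ) * t) := by
    rw [intervalIntegral.integral_of_le (by linarith [pi_pos])]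
    congr 1 with t
    simp only [hb_def, Complex.ofReal_intCast]
    ring_nf
  rw [hlam, hlimit, htrunc, ← mul_sub, norm_mul, norm_pow, Complex.norm_real, norm_eq_abs, sq_abs]
  calc σ ^ 2 * ‖_‖ ≤ σ ^ 2 * (exp (-b * π ^ 2) / (b * π)) := by
        gcongr
        exact norm_integral_Ioc_sub_integral_gaussian_mul_cexp_le hb pi_pos j
    _ = (1 / π) * σ ^ 2 * ℓ ^ 2 * exp (-(π ^ 2) / ℓ ^ 2) := by
        rw [hb_def]
        field_simp

/-- The eigenvalue `λ_j^per = σ² ∫_{-π}^{π} e^{-t²/ℓ²} e^{ijt} dt`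
of the periodic Gaussian covariance operator satisfies
`|λ_j^per − √π σ² ℓ e^{-ℓ²j²/4}| ≤ (1/π) σ² ℓ² e^{-π²/ℓ²}`, uniformly in `j`. -/
theorem stmt10 (σ ℓ : ℝ) (hσ : 0 < σ) (hℓ : 0 < ℓ) (j : ℤ)
    (lam : ℂ)
    (hlam : lam = (σ ^ 2 : ℂ) * ∫ t in (-Real.pi)..Real.pi,
      (Real.exp (-(t ^ 2) / ℓ ^ 2) : ℂ) * Complex.exp (Complex.I * (j : ℂ) * (t : ℂ))) :
    ‖lam -
        ((Real.sqrt Real.pi * σ ^ 2 * ℓ * Real.exp (-(ℓ ^ 2 * (j : ℝ) ^ 2 / 4)) : ℝ) : ℂ)‖ ≤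
      (1 / Real.pi) * σ ^ 2 * ℓ ^ 2 * Real.exp (-(Real.pi ^ 2) / ℓ ^ 2) :=
  stmt10_general σ ℓ hℓ j lam hlam
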